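/- Let N be a network on m species with reactions (z_i, z'_i), i = 1,…,r, and N' a network on the same species with reactions (z̃_i, z̃'_i), i = 1,…,r̃. Suppose N and N' have the same set of reactant complexes, and for every reactant complex z⁰ ∈ ℕ^m the reaction cones satisfy C_R(z⁰) ∩ C_{R'}(z⁰) ≠ ∅. Then there exist rate constant vectors k ∈ ℝ^r_{>0} and k̃ ∈ ℝ^{r̃}_{>0} such that the mass-action vector fields coincide: Σ_{i=1}^r k_i (z'_i − z_i) x^{z_i} = Σ_{i=1}^{r̃} k̃_i (z̃'_i − z̃_i) x^{z̃_i} for all x ∈ ℝ^m_{>0}. -/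

import Mathlib

/- At a fixed reactant complex `z0` all reactions leaving `z0` share the monomial `x ^ z0`, so a
mass-action vector field is `∑_{z0} x ^ z0 • (∑_{z i = z0} k i • (z' i - z i))`, and the inner sums
range exactly over the reaction cone at `z0` as the rates vary. Choosing, at every reactant
complex, rates of both networks that hit a common point of the two cones therefore makes every
coefficient of `x ^ z0` agree. -/

open scoped BigOperators

/-- The reaction cone of a network at the complex `z0`: all positive combinations of the
reaction vectors of reactions whose reactant complex is `z0` (equal to `{0}` if there are
no such reactions). -/
def reactionCone (m r : ℕ) (z z' : Fin r → Fin m → ℕ) (z0 : Fin m → ℕ) :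
    Set (Fin m → ℝ) :=
  {v | ∃ α : Fin r → ℝ, (∀ i, z i = z0 → 0 < α i) ∧
    v = ∑ i ∈ Finset.univ.filter (fun i => z i = z0),
        α i • (fun j => (z' i j : ℝ) - (z i j : ℝ))}

open Finset

section

variable {m r : ℕ}

def reactionVector (z z' : Fin r → Fin m → ℕ) (i : Fin r) : Fin m → ℝ :=
  fun j => (z' i j : ℝ) - (z i j : ℝ)

def massActionField (z z' : Fin r → Fin m → ℕ) (k : Fin r → ℝ) (x : Fin m → ℝ) :
    Fin m → ℝ :=
  ∑ i, k i • fun j => ((z' i j : ℝ) - (z i j : ℝ)) * ∏ l, x l ^ z i l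

theorem massActionField_eq_sum_reactantComplexes (z z' : Fin r → Fin m → ℕ)
    (k : Fin r → ℝ) (x : Fin m → ℝ) {T : Finset (Fin m → ℕ)} (hT : ∀ i, z i ∈ T) :
    massActionField z z' k x =
      ∑ z0 ∈ T, (∏ l, x l ^ z0 l) • ∑ i with z i = z0, k i • reactionVector z z' i := by
  rw [massActionField, ← sum_fiberwise_of_maps_to fun i _ => hT i]
  refine sum_congr rfl fun z0 _ => ?_
  rw [smul_sum]
  refine sum_congr rfl fun i hi => ?_
  funext j
  simp only [(mem_filter.1 hi).2, reactionVector, Pi.smul_apply, smul_eq_mul]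
  ring

theorem exists_rates_sum_eq_of_mem_reactionCone (z z' : Fin r → Fin m → ℕ)
    (v : (Fin m → ℕ) → Fin m → ℝ)
    (hv : ∀ z0, (∃ i, z i = z0) → v z0 ∈ reactionCone m r z z' z0) :
    ∃ k : Fin r → ℝ, (∀ i, 0 < k i) ∧ ∀ z0, (∃ i, z i = z0) →
      ∑ i with z i = z0, k i • reactionVector z z' i = v z0 := by
  choose! α hα_pos hα_eq using hv
  refine ⟨fun i => α (z i) i, fun i => hα_pos _ ⟨i, rfl⟩ i rfl, fun z0 hz0 => ?_⟩
  rw [hα_eq z0 hz0]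
  refine sum_congr rfl fun i hi => ?_
  rw [← (mem_filter.1 hi).2]
  rfl

end

theorem exists_rates_equal_vector_fields_of_cones_intersect_general
    (m r rt : ℕ)
    (z z' : Fin r → Fin m → ℕ)
    (zt zt' : Fin rt → Fin m → ℕ)
    (hsame : {z0 : Fin m → ℕ | ∃ i, z i = z0} = {z0 : Fin m → ℕ | ∃ i, zt i = z0})
    (hcone : ∀ z0 : Fin m → ℕ, (∃ i, z i = z0) →
      (reactionCone m r z z' z0 ∩ reactionCone m rt zt zt' z0).Nonempty) :
    ∃ (k : Fin r → ℝ) (kt : Fin rt → ℝ), (∀ i, 0 < k i) ∧ (∀ i, 0 < kt i) ∧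
      ∀ x : Fin m → ℝ, (∀ j, 0 < x j) →
        (∑ i : Fin r, k i •
          (fun j => ((z' i j : ℝ) - (z i j : ℝ)) * ∏ l, x l ^ z i l))
        = (∑ i : Fin rt, kt i •
          (fun j => ((zt' i j : ℝ) - (zt i j : ℝ)) * ∏ l, x l ^ zt i l)) := by
  have hreactant : ∀ z0, (∃ i, z i = z0) ↔ ∃ i, zt i = z0 := Set.ext_iff.1 hsame
  choose! v hv using hcone
  obtain ⟨k, hk, hkv⟩ :=
    exists_rates_sum_eq_of_mem_reactionCone z z' v fun z0 h => (hv z0 h).1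
  obtain ⟨kt, hkt, hktv⟩ := exists_rates_sum_eq_of_mem_reactionCone zt zt' v
    fun z0 h => (hv z0 ((hreactant z0).2 h)).2
  refine ⟨k, kt, hk, hkt, fun x _ => ?_⟩
  change massActionField z z' k x = massActionField zt zt' kt x
  have hzt_mem : ∀ i, zt i ∈ univ.image z := fun i => by
    obtain ⟨j, hj⟩ := (hreactant _).2 ⟨i, rfl⟩
    exact mem_image.2 ⟨j, mem_univ j, hj⟩
  rw [massActionField_eq_sum_reactantComplexes z z' k x fun i => mem_image_of_mem z (mem_univ i),
    massActionField_eq_sum_reactantComplexes zt zt' kt x hzt_mem]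
  refine sum_congr rfl fun z0 hz0 => ?_
  obtain ⟨i, -, rfl⟩ := mem_image.1 hz0
  rw [hkv _ ⟨i, rfl⟩, hktv _ ((hreactant _).1 ⟨i, rfl⟩)]

/-- Paper: sufficiency direction of Theorem 3.1, from Craciun–Pantea.
If `N` and `N'` have the same reactant complexes and their reaction cones intersect at
every reactant complex, then there exist rate constant vectors making the two mass-action
vector fields coincide on the positive orthant. -/
theorem exists_rates_equal_vector_fields_of_cones_intersect
    (m r rt : ℕ)
    (z z' : Fin r → Fin m → ℕ) (hzz : ∀ i, z i ≠ z' i)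
    (zt zt' : Fin rt → Fin m → ℕ) (hzzt : ∀ i, zt i ≠ zt' i)
    (hsame : {z0 : Fin m → ℕ | ∃ i, z i = z0} = {z0 : Fin m → ℕ | ∃ i, zt i = z0})
    (hcone : ∀ z0 : Fin m → ℕ, (∃ i, z i = z0) →
      (reactionCone m r z z' z0 ∩ reactionCone m rt zt zt' z0).Nonempty) :
    ∃ (k : Fin r → ℝ) (kt : Fin rt → ℝ), (∀ i, 0 < k i) ∧ (∀ i, 0 < kt i) ∧
      ∀ x : Fin m → ℝ, (∀ j, 0 < x j) →
        (∑ i : Fin r, k i •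
          (fun j => ((z' i j : ℝ) - (z i j : ℝ)) * ∏ l, x l ^ z i l))
        = (∑ i : Fin rt, kt i •
          (fun j => ((zt' i j : ℝ) - (zt i j : ℝ)) * ∏ l, x l ^ zt i l)) :=
  exists_rates_equal_vector_fields_of_cones_intersect_general m r rt z z' zt zt' hsame hcone
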